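/- arXiv:1009.0114 — 2 statements merged into one kernel-verified Lean document; each statement's English description precedes it below -/
import Mathlib

section
/- Let f(n) be the number of walks of length n from (0,0) to (0,0) on the directed graph D_2 with vertices {(i,j) ∈ ℤ≥0² : i+j ≤ 2} and edges (a,b)→(a,b+1), (a,b)→(a-1,b), (a,b)→(a+1,b-1) (whenever targets lie in the vertex set). Then f(n) = Fib(n-1) when 3 divides n and n ≥ 3, f(0) = 1, and f(n) = 0 when 3 does not divide n, where Fib denotes the Fibonacci sequence with Fib(1)=Fib(2)=1. -/
/-- Directed edge of the graph `D_k`. -/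
def Dedge (k : ℕ) (p q : ℕ × ℕ) : Prop :=
  p.1 + p.2 ≤ k ∧ q.1 + q.2 ≤ k ∧
    (q = (p.1, p.2 + 1) ∨ (q.1 + 1 = p.1 ∧ q.2 = p.2) ∨
      (q.1 = p.1 + 1 ∧ q.2 + 1 = p.2))

/-- Walks of length `n` from `u` to `v` in `D_k`. -/
def Walk (k n : ℕ) (u v : ℕ × ℕ) : Type :=
  { f : Fin (n + 1) → ℕ × ℕ // f 0 = u ∧ f (Fin.last n) = v ∧
      ∀ i : Fin n, Dedge k (f i.castSucc) (f i.succ) }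

/-- The number of walks of length `n` from `u` to `v` in `D_k`. -/
noncomputable def walkCount (k n : ℕ) (u v : ℕ × ℕ) : ℕ := Nat.card (Walk k n u v)

instance walkFinite (k n : ℕ) (u v : ℕ × ℕ) : Finite (Walk k n u v) := by
  classical
  set S : Finset (ℕ × ℕ) := insert u ((Finset.range (k+1)) ×ˢ (Finset.range (k+1))) with hS
  have hmem : ∀ f : Walk k n u v, ∀ i, f.1 i ∈ S := by
    intro f i
    induction i using Fin.cases with
    | zero => rw [f.2.1]; exact Finset.mem_insert_self _ _
    | succ j =>
      have h := (f.2.2.2 j).2.1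
      apply Finset.mem_insert_of_mem
      simp only [Finset.mem_product, Finset.mem_range]
      omega
  have : Function.Injective
      (fun f : Walk k n u v => (fun i => (⟨f.1 i, hmem f i⟩ : ↥S))) := by
    intro a b h
    exact Subtype.ext (funext fun i => congrArg Subtype.val (congrFun h i))
  exact Finite.of_injective _ this

def walkEquiv (k n : ℕ) (u v : ℕ × ℕ) :
    Walk k (n+1) u v ≃ Σ w : {w : ℕ × ℕ // Dedge k u w}, Walk k n w.1 v where
  toFun f := ⟨⟨f.1 (Fin.succ 0), by
      have h := f.2.2.2 0
      rwa [Fin.castSucc_zero, f.2.1] at h⟩,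
    ⟨fun i => f.1 i.succ, rfl, by
      show f.1 (Fin.last n).succ = v
      rw [Fin.succ_last]; exact f.2.2.1, fun i => by
      show Dedge k (f.1 i.castSucc.succ) (f.1 i.succ.succ)
      have h := f.2.2.2 i.succ
      rwa [← Fin.succ_castSucc] at h⟩⟩
  invFun x := ⟨fun i => Fin.cases u x.2.1 i, by simp, by
      show Fin.cases u x.2.1 (Fin.last (n+1)) = v
      rw [← Fin.succ_last]
      simp only [Fin.cases_succ]
      exact x.2.2.2.1, by
      intro i
      induction i using Fin.cases with
      | zero =>
        show Dedge k (Fin.cases u x.2.1 (Fin.castSucc 0)) (Fin.cases u x.2.1 (Fin.succ 0))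
        simp only [Fin.castSucc_zero, Fin.cases_zero, Fin.cases_succ, x.2.2.1]
        exact x.1.2
      | succ j =>
        show Dedge k (Fin.cases u x.2.1 j.succ.castSucc) (Fin.cases u x.2.1 j.succ.succ)
        rw [← Fin.succ_castSucc]
        simp only [Fin.cases_succ]
        exact x.2.2.2.2 j⟩
  left_inv f := Subtype.ext (funext fun i => by
    induction i using Fin.cases with
    | zero => simp only [Fin.cases_zero]; exact f.2.1.symm
    | succ j => simp only [Fin.cases_succ])
  right_inv x := by
    obtain ⟨⟨w, hw⟩, g⟩ := x
    obtain ⟨gf, hg0, hgl, hge⟩ := g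
    simp only at hg0
    subst hg0
    exact congrArg (Sigma.mk _) (Subtype.ext (funext fun i => by
      simp only [Fin.cases_succ]))

lemma walkCount_succ (k n : ℕ) (u v : ℕ × ℕ) (s : Finset (ℕ × ℕ))
    (hs : ∀ w, Dedge k u w ↔ w ∈ s) :
    walkCount k (n+1) u v = ∑ w ∈ s, walkCount k n w v := by
  classical
  have e : Walk k (n+1) u v ≃ Σ b : {w : ℕ × ℕ // w ∈ s}, Walk k n b.1 v :=
    (walkEquiv k n u v).trans (Equiv.sigmaCongrLeft
      (β := fun b : {w : ℕ × ℕ // w ∈ s} => Walk k n b.1 v)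
      (Equiv.subtypeEquivRight hs))
  letI : ∀ b : {w : ℕ × ℕ // w ∈ s}, Fintype (Walk k n b.1 v) := fun b => Fintype.ofFinite _
  rw [walkCount, Nat.card_congr e, Nat.card_eq_fintype_card, Fintype.card_sigma]
  rw [← Finset.sum_coe_sort s (fun w => walkCount k n w v)]
  exact Finset.sum_congr rfl fun b _ => (Nat.card_eq_fintype_card).symm

lemma walkCount_zero (k : ℕ) (u v : ℕ × ℕ) :
    walkCount k 0 u v = if u = v then 1 else 0 := by
  split_ifs with h
  · subst h
    haveI : Unique (Walk k 0 u u) :=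
      { default := ⟨fun _ => u, rfl, rfl, fun i => i.elim0⟩
        uniq := fun f => Subtype.ext (funext fun i => by
          have : i = 0 := Fin.ext (by omega)
          rw [this, f.2.1]) }
    exact Nat.card_unique
  · haveI : IsEmpty (Walk k 0 u v) := ⟨fun f => h (f.2.1.symm.trans f.2.2.1)⟩
    exact Nat.card_of_isEmpty

lemma c00 (n : ℕ) : walkCount 2 (n+1) (0,0) (0,0) = walkCount 2 n (0,1) (0,0) := by
  rw [walkCount_succ 2 n (0,0) (0,0) {(0,1)} (by
    rintro ⟨a, b⟩
    simp only [Dedge, Finset.mem_singleton, Prod.mk.injEq, Prod.ext_iff]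
    omega), Finset.sum_singleton]

lemma c01 (n : ℕ) : walkCount 2 (n+1) (0,1) (0,0) =
    walkCount 2 n (0,2) (0,0) + walkCount 2 n (1,0) (0,0) := by
  rw [walkCount_succ 2 n (0,1) (0,0) {(0,2),(1,0)} (by
    rintro ⟨a, b⟩
    simp only [Dedge, Finset.mem_insert, Finset.mem_singleton, Prod.mk.injEq, Prod.ext_iff]
    omega), Finset.sum_pair (by decide)]

lemma c02 (n : ℕ) : walkCount 2 (n+1) (0,2) (0,0) = walkCount 2 n (1,1) (0,0) := by
  rw [walkCount_succ 2 n (0,2) (0,0) {(1,1)} (by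
    rintro ⟨a, b⟩
    simp only [Dedge, Finset.mem_singleton, Prod.mk.injEq, Prod.ext_iff]
    omega), Finset.sum_singleton]

lemma c10 (n : ℕ) : walkCount 2 (n+1) (1,0) (0,0) =
    walkCount 2 n (0,0) (0,0) + walkCount 2 n (1,1) (0,0) := by
  rw [walkCount_succ 2 n (1,0) (0,0) {(0,0),(1,1)} (by
    rintro ⟨a, b⟩
    simp only [Dedge, Finset.mem_insert, Finset.mem_singleton, Prod.mk.injEq, Prod.ext_iff]
    omega), Finset.sum_pair (by decide)]

lemma c11 (n : ℕ) : walkCount 2 (n+1) (1,1) (0,0) =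
    walkCount 2 n (0,1) (0,0) + walkCount 2 n (2,0) (0,0) := by
  rw [walkCount_succ 2 n (1,1) (0,0) {(0,1),(2,0)} (by
    rintro ⟨a, b⟩
    simp only [Dedge, Finset.mem_insert, Finset.mem_singleton, Prod.mk.injEq, Prod.ext_iff]
    omega), Finset.sum_pair (by decide)]

lemma c20 (n : ℕ) : walkCount 2 (n+1) (2,0) (0,0) = walkCount 2 n (1,0) (0,0) := by
  rw [walkCount_succ 2 n (2,0) (0,0) {(1,0)} (by
    rintro ⟨a, b⟩
    simp only [Dedge, Finset.mem_singleton, Prod.mk.injEq, Prod.ext_iff]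
    omega), Finset.sum_singleton]

lemma key (m : ℕ) :
    walkCount 2 (3*m+3) (0,0) (0,0) = Nat.fib (3*m+2) ∧
    walkCount 2 (3*m+3) (0,1) (0,0) = 0 ∧
    walkCount 2 (3*m+3) (0,2) (0,0) = 0 ∧
    walkCount 2 (3*m+3) (1,0) (0,0) = 0 ∧
    walkCount 2 (3*m+3) (1,1) (0,0) = Nat.fib (3*m+3) ∧
    walkCount 2 (3*m+3) (2,0) (0,0) = 0 := by
  induction m with
  | zero =>
    rw [show (3*0+3 : ℕ) = 0+1+1+1 from by norm_num]
    simp only [c00, c01, c02, c10, c11, c20, walkCount_zero]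
    norm_num
  | succ m ih =>
    obtain ⟨h1, h2, h3, h4, h5, h6⟩ := ih
    rw [show 3*(m+1)+3 = 3*m+3+1+1+1 from by ring]
    simp only [c00, c01, c02, c10, c11, c20, h1, h2, h3, h4, h5, h6,
      add_zero, zero_add, Nat.add_zero, Nat.zero_add]
    have e1 : Nat.fib (3*m+2+2) = Nat.fib (3*m+2) + Nat.fib (3*m+2+1) := Nat.fib_add_two
    have e2 : Nat.fib (3*m+3+2) = Nat.fib (3*m+3) + Nat.fib (3*m+3+1) := Nat.fib_add_two
    have e3 : Nat.fib (3*m+4+2) = Nat.fib (3*m+4) + Nat.fib (3*m+4+1) := Nat.fib_add_two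
    rw [show (3*m+3+1+1+1 : ℕ) = 3*m+4+2 from by ring, show 3*(m+1)+2 = 3*m+3+2 from by ring]
    rw [show (3*m+2+1 : ℕ) = 3*m+3 from by ring, show (3*m+2+2 : ℕ) = 3*m+4 from by ring] at e1
    rw [show (3*m+3+1 : ℕ) = 3*m+4 from by ring] at e2
    rw [show (3*m+4+1 : ℕ) = 3*m+3+2 from by ring, e2] at e3
    refine ⟨?_, trivial, trivial, trivial, ?_, trivial⟩ <;> omega


/-- The number of closed walks of length `n` at `(0,0)` in `D_2`: it is
`Fib (n-1)` when `3 ∣ n`, `n ≥ 3`, it is `1` at `n = 0`, and it is `0`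
when `3 ∤ n`. -/
theorem stmt2 :
    (∀ n : ℕ, 3 ∣ n → 3 ≤ n → walkCount 2 n (0, 0) (0, 0) = Nat.fib (n - 1)) ∧
    walkCount 2 0 (0, 0) (0, 0) = 1 ∧
    (∀ n : ℕ, ¬ 3 ∣ n → walkCount 2 n (0, 0) (0, 0) = 0) := by
  refine ⟨?_, by simp [walkCount_zero], ?_⟩
  · rintro n ⟨k, rfl⟩ hn
    obtain ⟨j, rfl⟩ : ∃ j, k = j + 1 := ⟨k - 1, by omega⟩
    rw [show 3*(j+1) - 1 = 3*j+2 from by omega, show 3*(j+1) = 3*j+3 from by ring]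
    exact (key j).1
  · intro n hn
    have h3 : n % 3 = 1 ∨ n % 3 = 2 := by omega
    rcases h3 with h | h
    · obtain ⟨m, rfl⟩ : ∃ m, n = 3*m+1 := ⟨n/3, by omega⟩
      rw [c00]
      rcases m with _ | j
      · rw [show 3*0 = 0 from rfl, walkCount_zero]; simp
      · rw [show 3*(j+1) = 3*j+3 from by ring]; exact (key j).2.1
    · obtain ⟨m, rfl⟩ : ∃ m, n = 3*m+2 := ⟨n/3, by omega⟩
      rw [show 3*m+2 = 3*m+1+1 from by ring, c00, c01]
      rcases m with _ | j
      · rw [show 3*0 = 0 from rfl, walkCount_zero, walkCount_zero]; simp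
      · rw [show 3*(j+1) = 3*j+3 from by ring, (key j).2.2.1, (key j).2.2.2.1]
end

section
/- For every k ≥ 1, the graph D_k has no closed walks of length 1 or 2, and the total number of closed walks of length 3 (summed over all starting vertices) is 3k²; equivalently, tr(A_k) = 0, tr(A_k²) = 0, and tr(A_k³) = 3k², where A_k is the adjacency matrix of D_k. -/
instance (k : ℕ) (p q : ℕ × ℕ) : Decidable (Dedge k p q) := by
  unfold Dedge; infer_instance

/-- The vertex set of `D_k`: pairs `(i,j)` of nonnegative integers with `i + j ≤ k`. -/
def DVerts (k : ℕ) : Finset (ℕ × ℕ) :=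
  (Finset.range (k + 1) ×ˢ Finset.range (k + 1)).filter fun p => p.1 + p.2 ≤ k

/-- The adjacency matrix of `D_k` over `ℤ`. -/
def adjD (k : ℕ) : Matrix (DVerts k) (DVerts k) ℤ :=
  fun u v => if Dedge k u.1 v.1 then 1 else 0

open Finset

/-! ### Auxiliary definitions and lemmas -/

def Bx (k : ℕ) : Finset (ℕ × ℕ) := Finset.range (k+1) ×ˢ Finset.range (k+1)

def Gx (k : ℕ) (p q : ℕ × ℕ) : ℤ := if Dedge k p q then 1 else 0

/-! #### Counting lemmas -/

lemma sum_ind_le (n j : ℕ) :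
    ∑ a ∈ range n, (if a ≤ j then (1:ℤ) else 0) = (min n (j+1) : ℕ) := by
  induction n with
  | zero => simp
  | succ n ih =>
    rw [Finset.sum_range_succ, ih]
    split_ifs with h <;> push_cast <;> omega

lemma slice2 (n₁ n₂ j : ℕ) (h₁ : j < n₁) (h₂ : j < n₂) :
    ∑ a ∈ range n₁, ∑ b ∈ range n₂, (if a + b = j then (1:ℤ) else 0) = ((j:ℤ)+1) := by
  have inner : ∀ a, ∑ b ∈ range n₂, (if a + b = j then (1:ℤ) else 0)
      = if a ≤ j then 1 else 0 := by
    intro a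
    by_cases ha : a ≤ j
    · rw [Finset.sum_congr rfl (fun b _ => show _ = if b = j - a then (1:ℤ) else 0 from by
        split_ifs <;> omega)]
      rw [Finset.sum_ite_eq' (range n₂) (j - a) (fun _ => (1:ℤ))]
      rw [if_pos (by simp only [Finset.mem_range]; omega), if_pos ha]
    · rw [if_neg ha]
      apply Finset.sum_eq_zero
      intro b _
      rw [if_neg (by omega)]
  rw [Finset.sum_congr rfl (fun a _ => inner a), sum_ind_le]
  have : min n₁ (j+1) = j+1 := by omega
  rw [this]; push_cast; ring

lemma tri2 (n₁ n₂ m : ℕ) (h₁ : m < n₁) (h₂ : m < n₂) :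
    2 * ∑ a ∈ range n₁, ∑ b ∈ range n₂, (if a + b ≤ m then (1:ℤ) else 0)
      = ((m:ℤ)+1) * ((m:ℤ)+2) := by
  induction m with
  | zero =>
    have : ∑ a ∈ range n₁, ∑ b ∈ range n₂, (if a + b ≤ 0 then (1:ℤ) else 0)
        = ∑ a ∈ range n₁, ∑ b ∈ range n₂, (if a + b = 0 then (1:ℤ) else 0) := by
      apply Finset.sum_congr rfl; intro a _; apply Finset.sum_congr rfl; intro b _
      exact if_congr (by omega) rfl rfl
    rw [this, slice2 _ _ _ h₁ h₂]; norm_num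
  | succ m ih =>
    have key : ∀ a b : ℕ, (if a + b ≤ m + 1 then (1:ℤ) else 0)
        = (if a + b ≤ m then (1:ℤ) else 0) + (if a + b = m + 1 then (1:ℤ) else 0) := by
      intro a b; split_ifs <;> omega
    have : ∑ a ∈ range n₁, ∑ b ∈ range n₂, (if a + b ≤ m+1 then (1:ℤ) else 0)
        = (∑ a ∈ range n₁, ∑ b ∈ range n₂, (if a + b ≤ m then (1:ℤ) else 0))
          + ∑ a ∈ range n₁, ∑ b ∈ range n₂, (if a + b = m+1 then (1:ℤ) else 0) := by
      rw [← Finset.sum_add_distrib]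
      apply Finset.sum_congr rfl; intro a _
      rw [← Finset.sum_add_distrib]
      apply Finset.sum_congr rfl; intro b _
      exact key a b
    rw [this, mul_add, ih (by omega) (by omega), slice2 _ _ _ h₁ h₂]
    push_cast; ring

lemma triC (n₁ n₂ k c : ℕ) (h₁ : k < n₁ + c) (h₂ : k < n₂ + c) :
    2 * ∑ a ∈ range n₁, ∑ b ∈ range n₂, (if a + b + c ≤ k then (1:ℤ) else 0)
      = ((k+1-c) * (k+2-c) : ℕ) := by
  by_cases hc : c ≤ k
  · have : ∑ a ∈ range n₁, ∑ b ∈ range n₂, (if a + b + c ≤ k then (1:ℤ) else 0)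
        = ∑ a ∈ range n₁, ∑ b ∈ range n₂, (if a + b ≤ k - c then (1:ℤ) else 0) := by
      apply Finset.sum_congr rfl; intro a _; apply Finset.sum_congr rfl; intro b _
      exact if_congr (by omega) rfl rfl
    rw [this, tri2 _ _ (k-c) (by omega) (by omega)]
    have e1 : (k+1-c) = (k-c)+1 := by omega
    have e2 : (k+2-c) = (k-c)+2 := by omega
    rw [e1, e2]; push_cast; ring
  · have : ∑ a ∈ range n₁, ∑ b ∈ range n₂, (if a + b + c ≤ k then (1:ℤ) else 0) = 0 := by
      apply Finset.sum_eq_zero; intro a _; apply Finset.sum_eq_zero; intro b _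
      rw [if_neg (by omega)]
    rw [this]
    have : k + 1 - c = 0 := by omega
    rw [this]; simp

/-! #### Walk-counting lemmas -/

lemma sum_indic (k : ℕ) (F : ℕ × ℕ → ℤ) (c : ℕ × ℕ) (C : Prop) [Decidable C] :
    (∑ q ∈ Bx k, (if q = c ∧ C then (1:ℤ) else 0) * F q)
      = if c ∈ Bx k ∧ C then F c else 0 := by
  by_cases hC : C
  · simp only [hC, and_true]
    rw [Finset.sum_congr rfl (fun q _ => show _ = if q = c then F q else 0 from by
      split_ifs <;> simp_all)]
    exact Finset.sum_ite_eq' _ _ _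
  · simp [hC]

lemma step (k : ℕ) (p : ℕ × ℕ) (F : ℕ × ℕ → ℤ) :
    ∑ q ∈ Bx k, Gx k p q * F q =
      (if p.1+p.2+1 ≤ k then F (p.1, p.2+1) else 0) +
      ((if p.1+p.2 ≤ k ∧ 1 ≤ p.1 then F (p.1-1, p.2) else 0) +
       (if p.1+p.2 ≤ k ∧ 1 ≤ p.2 then F (p.1+1, p.2-1) else 0)) := by
  have hG : ∀ q, Gx k p q =
      (if q = (p.1, p.2+1) ∧ p.1+p.2+1 ≤ k then (1:ℤ) else 0) +
      ((if q = (p.1-1, p.2) ∧ (p.1+p.2 ≤ k ∧ 1 ≤ p.1) then 1 else 0) +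
       (if q = (p.1+1, p.2-1) ∧ (p.1+p.2 ≤ k ∧ 1 ≤ p.2) then 1 else 0)) := by
    intro q
    simp only [Gx, Dedge, Prod.ext_iff]
    split_ifs <;> omega
  rw [Finset.sum_congr rfl (fun q _ => by rw [hG q])]
  simp only [add_mul, Finset.sum_add_distrib, sum_indic]
  have e1 : ((p.1, p.2+1) ∈ Bx k ∧ p.1+p.2+1 ≤ k) ↔ (p.1+p.2+1 ≤ k) := by
    simp only [Bx, Finset.mem_product, Finset.mem_range]; omega
  have e2 : ((p.1-1, p.2) ∈ Bx k ∧ (p.1+p.2 ≤ k ∧ 1 ≤ p.1)) ↔ (p.1+p.2 ≤ k ∧ 1 ≤ p.1) := by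
    simp only [Bx, Finset.mem_product, Finset.mem_range]; omega
  have e3 : ((p.1+1, p.2-1) ∈ Bx k ∧ (p.1+p.2 ≤ k ∧ 1 ≤ p.2)) ↔ (p.1+p.2 ≤ k ∧ 1 ≤ p.2) := by
    simp only [Bx, Finset.mem_product, Finset.mem_range]; omega
  rw [if_congr e1 rfl rfl, if_congr e2 rfl rfl, if_congr e3 rfl rfl]

set_option maxHeartbeats 1000000 in
lemma midU (k a b : ℕ) :
    ∑ r ∈ Bx k, Gx k (a, b+1) r * Gx k r (a, b) =
      (if 1 ≤ a ∧ a+b+1 ≤ k then (1:ℤ) else 0) + (if a+b+1 ≤ k then 1 else 0) := by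
  rw [step]
  simp only [Gx, Dedge, Prod.ext_iff, and_true, true_and, and_false,
    false_and, or_true, true_or, or_false, false_or]
  split_ifs <;> omega

set_option maxHeartbeats 1000000 in
lemma midL (k a b : ℕ) (ha : 1 ≤ a) :
    ∑ r ∈ Bx k, Gx k (a-1, b) r * Gx k r (a, b) =
      (if a+b ≤ k then (1:ℤ) else 0) + (if 1 ≤ b ∧ a+b ≤ k then 1 else 0) := by
  rw [step]
  simp only [Gx, Dedge, Prod.ext_iff, and_true, true_and, and_false,
    false_and, or_true, true_or, or_false, false_or]
  split_ifs <;> omega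

set_option maxHeartbeats 1000000 in
lemma midD (k a b : ℕ) (hb : 1 ≤ b) :
    ∑ r ∈ Bx k, Gx k (a+1, b-1) r * Gx k r (a, b) =
      (if a+b+1 ≤ k then (1:ℤ) else 0) + (if a+b ≤ k then 1 else 0) := by
  rw [step]
  simp only [Gx, Dedge, Prod.ext_iff, and_true, true_and, and_false,
    false_and, or_true, true_or, or_false, false_or]
  split_ifs <;> omega

set_option maxHeartbeats 1000000 in
lemma walks (k : ℕ) (p : ℕ × ℕ) :
    ∑ q ∈ Bx k, Gx k p q * ∑ r ∈ Bx k, Gx k q r * Gx k r p =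
      (if p.1+p.2+1 ≤ k then (1:ℤ) else 0)
      + (if 1 ≤ p.1 ∧ p.1+p.2+1 ≤ k then 1 else 0)
      + (if 1 ≤ p.2 ∧ p.1+p.2+1 ≤ k then 1 else 0)
      + (if 1 ≤ p.1 ∧ p.1+p.2 ≤ k then 1 else 0)
      + (if 1 ≤ p.1 ∧ 1 ≤ p.2 ∧ p.1+p.2 ≤ k then 1 else 0)
      + (if 1 ≤ p.2 ∧ p.1+p.2 ≤ k then 1 else 0) := by
  obtain ⟨a, b⟩ := p
  rw [step]
  simp only
  rw [if_ctx_congr (Iff.rfl : a+b+1 ≤ k ↔ a+b+1 ≤ k) (fun _ => midU k a b) (fun _ => rfl),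
      if_ctx_congr (Iff.rfl : a+b ≤ k ∧ 1 ≤ a ↔ a+b ≤ k ∧ 1 ≤ a) (fun h => midL k a b h.2) (fun _ => rfl),
      if_ctx_congr (Iff.rfl : a+b ≤ k ∧ 1 ≤ b ↔ a+b ≤ k ∧ 1 ≤ b) (fun h => midD k a b h.2) (fun _ => rfl)]
  split_ifs <;> omega

/-! #### Trace expansions -/

lemma trace1 (k : ℕ) : Matrix.trace (adjD k) = ∑ p ∈ DVerts k, Gx k p p := by
  simp only [Matrix.trace, Matrix.diag_apply]
  have hA : ∀ u : {x // x ∈ DVerts k}, adjD k u u = Gx k u.1 u.1 := fun _ => rfl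
  simp only [hA]
  rw [Finset.sum_coe_sort (DVerts k) (fun p => Gx k p p)]

lemma trace2 (k : ℕ) :
    Matrix.trace (adjD k ^ 2) = ∑ p ∈ DVerts k, ∑ q ∈ DVerts k, Gx k p q * Gx k q p := by
  rw [pow_two]
  simp only [Matrix.trace, Matrix.diag_apply, Matrix.mul_apply]
  have hA : ∀ u v : {x // x ∈ DVerts k}, adjD k u v = Gx k u.1 v.1 := fun _ _ => rfl
  simp only [hA]
  rw [Finset.sum_coe_sort (DVerts k) (fun p => ∑ q : {x // x ∈ DVerts k}, Gx k p q.1 * Gx k q.1 p)]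
  refine Finset.sum_congr rfl fun p _ => ?_
  rw [Finset.sum_coe_sort (DVerts k) (fun q => Gx k p q * Gx k q p)]

lemma trace3 (k : ℕ) :
    Matrix.trace (adjD k ^ 3) =
      ∑ p ∈ DVerts k, ∑ q ∈ DVerts k, ∑ r ∈ DVerts k, Gx k p q * (Gx k q r * Gx k r p) := by
  have h3 : adjD k ^ 3 = adjD k * (adjD k * adjD k) := by
    rw [pow_succ, pow_two, mul_assoc]
  rw [h3]
  simp only [Matrix.trace, Matrix.diag_apply, Matrix.mul_apply, Finset.mul_sum]
  have hA : ∀ u v : {x // x ∈ DVerts k}, adjD k u v = Gx k u.1 v.1 := fun _ _ => rfl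
  simp only [hA]
  rw [Finset.sum_coe_sort (DVerts k) (fun p => ∑ q : {x // x ∈ DVerts k},
    ∑ r : {x // x ∈ DVerts k}, Gx k p q.1 * (Gx k q.1 r.1 * Gx k r.1 p))]
  refine Finset.sum_congr rfl fun p _ => ?_
  rw [Finset.sum_coe_sort (DVerts k) (fun q => ∑ r : {x // x ∈ DVerts k},
    Gx k p q * (Gx k q r.1 * Gx k r.1 p))]
  refine Finset.sum_congr rfl fun q _ => ?_
  rw [Finset.sum_coe_sort (DVerts k) (fun r => Gx k p q * (Gx k q r * Gx k r p))]

lemma vsub (k : ℕ) : DVerts k ⊆ Bx k := Finset.filter_subset _ _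

lemma vmem (k : ℕ) : ∀ r ∈ Bx k, r ∉ DVerts k → ¬ (r.1 + r.2 ≤ k) := by
  intro r hr hn hle
  exact hn (Finset.mem_filter.2 ⟨hr, hle⟩)

lemma Gx_zl (k : ℕ) {p : ℕ × ℕ} (q : ℕ × ℕ) (h : ¬ (p.1 + p.2 ≤ k)) : Gx k p q = 0 := by
  rw [Gx, if_neg]; intro hd; exact h hd.1

lemma Gx_zr (k : ℕ) (p : ℕ × ℕ) {q : ℕ × ℕ} (h : ¬ (q.1 + q.2 ≤ k)) : Gx k p q = 0 := by
  rw [Gx, if_neg]; intro hd; exact h hd.2.1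

lemma trace3' (k : ℕ) :
    Matrix.trace (adjD k ^ 3) =
      ∑ p ∈ Bx k, ∑ q ∈ Bx k, Gx k p q * ∑ r ∈ Bx k, Gx k q r * Gx k r p := by
  rw [trace3]
  have einner : ∀ p q : ℕ × ℕ, ∑ r ∈ DVerts k, Gx k q r * Gx k r p
      = ∑ r ∈ Bx k, Gx k q r * Gx k r p := by
    intro p q
    apply Finset.sum_subset (vsub k)
    intro r hr hnr
    rw [Gx_zr k q (vmem k r hr hnr), zero_mul]
  have emid : ∀ p : ℕ × ℕ, ∑ q ∈ DVerts k, ∑ r ∈ DVerts k, Gx k p q * (Gx k q r * Gx k r p)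
      = ∑ q ∈ Bx k, Gx k p q * ∑ r ∈ Bx k, Gx k q r * Gx k r p := by
    intro p
    rw [Finset.sum_congr rfl fun q _ => show ∑ r ∈ DVerts k, Gx k p q * (Gx k q r * Gx k r p)
      = Gx k p q * ∑ r ∈ Bx k, Gx k q r * Gx k r p from by rw [← Finset.mul_sum, einner p q]]
    apply Finset.sum_subset (vsub k)
    intro q hq hnq
    rw [Gx_zr k p (vmem k q hq hnq), zero_mul]
  rw [Finset.sum_congr rfl fun p _ => emid p]
  apply Finset.sum_subset (vsub k)
  intro p hp hnp
  apply Finset.sum_eq_zero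
  intro q _
  rw [Gx_zl k q (vmem k p hp hnp), zero_mul]

/-- For `k ≥ 1`: `tr(A_k) = 0`, `tr(A_k²) = 0`, and `tr(A_k³) = 3k²`, i.e. `D_k`
has no closed walks of length `1` or `2` and exactly `3k²` closed walks of length `3`. -/
theorem stmt17 (k : ℕ) (hk : 1 ≤ k) :
    Matrix.trace (adjD k) = 0 ∧
    Matrix.trace (adjD k ^ 2) = 0 ∧
    Matrix.trace (adjD k ^ 3) = 3 * (k : ℤ) ^ 2 := by
  refine ⟨?_, ?_, ?_⟩
  · rw [trace1]
    apply Finset.sum_eq_zero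
    intro p _
    rw [Gx, if_neg]
    simp only [Dedge, Prod.ext_iff]
    omega
  · rw [trace2]
    apply Finset.sum_eq_zero
    intro p _
    apply Finset.sum_eq_zero
    intro q _
    simp only [Gx, Dedge, Prod.ext_iff]
    split_ifs <;> first | (exfalso; omega) | norm_num
  · rw [trace3', Finset.sum_congr rfl fun p _ => walks k p]
    simp only [Finset.sum_add_distrib]
    have hS1 : 2 * ∑ p ∈ Bx k, (if p.1+p.2+1 ≤ k then (1:ℤ) else 0) = (k*(k+1) : ℕ) := by
      have h := triC (k+1) (k+1) k 1 (by omega) (by omega)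
      rw [show (k+1-1)*(k+2-1) = k*(k+1) from by congr 1 <;> omega] at h
      simp only [Bx, Finset.sum_product]
      exact h
    have hS2 : 2 * ∑ p ∈ Bx k, (if 1 ≤ p.1 ∧ p.1+p.2+1 ≤ k then (1:ℤ) else 0)
        = ((k-1)*k : ℕ) := by
      simp only [Bx, Finset.sum_product]
      rw [Finset.sum_range_succ']
      rw [Finset.sum_congr rfl (fun a (_ : a ∈ range k) => Finset.sum_congr rfl
        (fun b _ => show (if 1 ≤ a+1 ∧ (a+1)+b+1 ≤ k then (1:ℤ) else 0)
          = (if a+b+2 ≤ k then (1:ℤ) else 0) from if_congr (by omega) rfl rfl))]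
      rw [Finset.sum_eq_zero (fun b (_ : b ∈ range (k+1)) =>
        if_neg (by omega : ¬(1 ≤ 0 ∧ 0+b+1 ≤ k))), add_zero]
      have h := triC k (k+1) k 2 (by omega) (by omega)
      rw [show (k+1-2)*(k+2-2) = (k-1)*k from by congr 1 <;> omega] at h
      exact h
    have hS3 : 2 * ∑ p ∈ Bx k, (if 1 ≤ p.2 ∧ p.1+p.2+1 ≤ k then (1:ℤ) else 0)
        = ((k-1)*k : ℕ) := by
      simp only [Bx, Finset.sum_product]
      rw [Finset.sum_congr rfl (fun a (_ : a ∈ range (k+1)) => show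
        (∑ b ∈ range (k+1), if 1 ≤ b ∧ a+b+1 ≤ k then (1:ℤ) else 0)
          = ∑ b ∈ range k, (if a+b+2 ≤ k then (1:ℤ) else 0) from by
        rw [Finset.sum_range_succ']
        rw [Finset.sum_congr rfl (fun b (_ : b ∈ range k) =>
          show (if 1 ≤ b+1 ∧ a+(b+1)+1 ≤ k then (1:ℤ) else 0)
            = (if a+b+2 ≤ k then (1:ℤ) else 0) from if_congr (by omega) rfl rfl)]
        rw [if_neg (by omega : ¬(1 ≤ 0 ∧ a+0+1 ≤ k)), add_zero])]
      have h := triC (k+1) k k 2 (by omega) (by omega)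
      rw [show (k+1-2)*(k+2-2) = (k-1)*k from by congr 1 <;> omega] at h
      exact h
    have hS4 : 2 * ∑ p ∈ Bx k, (if 1 ≤ p.1 ∧ p.1+p.2 ≤ k then (1:ℤ) else 0)
        = (k*(k+1) : ℕ) := by
      simp only [Bx, Finset.sum_product]
      rw [Finset.sum_range_succ']
      rw [Finset.sum_congr rfl (fun a (_ : a ∈ range k) => Finset.sum_congr rfl
        (fun b _ => show (if 1 ≤ a+1 ∧ (a+1)+b ≤ k then (1:ℤ) else 0)
          = (if a+b+1 ≤ k then (1:ℤ) else 0) from if_congr (by omega) rfl rfl))]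
      rw [Finset.sum_eq_zero (fun b (_ : b ∈ range (k+1)) =>
        if_neg (by omega : ¬(1 ≤ 0 ∧ 0+b ≤ k))), add_zero]
      have h := triC k (k+1) k 1 (by omega) (by omega)
      rw [show (k+1-1)*(k+2-1) = k*(k+1) from by congr 1 <;> omega] at h
      exact h
    have hS5 : 2 * ∑ p ∈ Bx k, (if 1 ≤ p.1 ∧ 1 ≤ p.2 ∧ p.1+p.2 ≤ k then (1:ℤ) else 0)
        = ((k-1)*k : ℕ) := by
      simp only [Bx, Finset.sum_product]
      rw [Finset.sum_range_succ']
      rw [Finset.sum_congr rfl (fun a (_ : a ∈ range k) => show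
        (∑ b ∈ range (k+1), if 1 ≤ a+1 ∧ 1 ≤ b ∧ (a+1)+b ≤ k then (1:ℤ) else 0)
          = ∑ b ∈ range k, (if a+b+2 ≤ k then (1:ℤ) else 0) from by
        rw [Finset.sum_range_succ']
        rw [Finset.sum_congr rfl (fun b (_ : b ∈ range k) =>
          show (if 1 ≤ a+1 ∧ 1 ≤ b+1 ∧ (a+1)+(b+1) ≤ k then (1:ℤ) else 0)
            = (if a+b+2 ≤ k then (1:ℤ) else 0) from if_congr (by omega) rfl rfl)]
        rw [if_neg (by omega : ¬(1 ≤ a+1 ∧ 1 ≤ 0 ∧ (a+1)+0 ≤ k)), add_zero])]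
      rw [Finset.sum_eq_zero (fun b (_ : b ∈ range (k+1)) =>
        if_neg (by omega : ¬(1 ≤ 0 ∧ 1 ≤ b ∧ 0+b ≤ k))), add_zero]
      have h := triC k k k 2 (by omega) (by omega)
      rw [show (k+1-2)*(k+2-2) = (k-1)*k from by congr 1 <;> omega] at h
      exact h
    have hS6 : 2 * ∑ p ∈ Bx k, (if 1 ≤ p.2 ∧ p.1+p.2 ≤ k then (1:ℤ) else 0)
        = (k*(k+1) : ℕ) := by
      simp only [Bx, Finset.sum_product]
      rw [Finset.sum_congr rfl (fun a (_ : a ∈ range (k+1)) => show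
        (∑ b ∈ range (k+1), if 1 ≤ b ∧ a+b ≤ k then (1:ℤ) else 0)
          = ∑ b ∈ range k, (if a+b+1 ≤ k then (1:ℤ) else 0) from by
        rw [Finset.sum_range_succ']
        rw [Finset.sum_congr rfl (fun b (_ : b ∈ range k) =>
          show (if 1 ≤ b+1 ∧ a+(b+1) ≤ k then (1:ℤ) else 0)
            = (if a+b+1 ≤ k then (1:ℤ) else 0) from if_congr (by omega) rfl rfl)]
        rw [if_neg (by omega : ¬(1 ≤ 0 ∧ a+0 ≤ k)), add_zero])]
      have h := triC (k+1) k k 1 (by omega) (by omega)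
      rw [show (k+1-1)*(k+2-1) = k*(k+1) from by congr 1 <;> omega] at h
      exact h
    push_cast [Nat.cast_sub hk] at hS1 hS2 hS3 hS4 hS5 hS6
    linarith [hS1, hS2, hS3, hS4, hS5, hS6]
end
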